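/- For an odd prime p and a subset S of Z/pZ, define the palette graph G(S) with vertex set S, where distinct vertices a, b are adjacent iff (a+b)/2 (i.e., the unique x with 2x = a+b in Z/pZ) lies in S. If C is a non-constant Fox p-coloring of a knot diagram D of a knot (one component), then the palette graph G(Im(C)) is connected. -/

import Mathlib

/-- An abstract (one-component) knot diagram: a set of arcs and a set of
crossings, each crossing having an over-arc and two under-arcs.  The
one-component condition says that any two arcs are joined by walking along the
diagram, i.e. by a chain of under-crossings. -/
structure KnotDiagram where
  Arc : Type
  Crossing : Type
  overArc : Crossing → Arc
  under₁ : Crossing → Arc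
  under₂ : Crossing → Arc
  oneComponent : ∀ a b : Arc,
    Relation.ReflTransGen
      (fun x y => ∃ c : Crossing,
        (under₁ c = x ∧ under₂ c = y) ∨ (under₁ c = y ∧ under₂ c = x)) a b

/-- A Fox `p`-coloring of a knot diagram. -/
def IsFoxColoring {p : ℕ} (D : KnotDiagram) (C : D.Arc → ZMod p) : Prop :=
  ∀ c : D.Crossing, C (D.under₁ c) + C (D.under₂ c) = 2 * C (D.overArc c)

/-- The palette graph of a subset `S ⊆ ℤ/pℤ`: vertices are the elements of
`S`, and distinct `a, b` are adjacent iff the unique `x` with `2x = a + b`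
lies in `S`. -/
def paletteGraph {p : ℕ} (S : Set (ZMod p)) : SimpleGraph S where
  Adj a b := (a : ZMod p) ≠ (b : ZMod p) ∧ ∃ c ∈ S, 2 * c = (a : ZMod p) + b
  symm := ⟨by
    rintro a b ⟨h, c, hc, he⟩
    exact ⟨h.symm, c, hc, by rw [he, add_comm]⟩⟩
  loopless := ⟨fun a h => h.1 rfl⟩

theorem palette_graph_of_coloring_connected
    (p : ℕ) (hp : p.Prime) (hodd : Odd p)
    (D : KnotDiagram) (C : D.Arc → ZMod p)
    (hC : IsFoxColoring D C) (hnc : ¬ ∀ a b : D.Arc, C a = C b) :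
    (paletteGraph (Set.range C)).Connected := by
  have key : ∀ a b : D.Arc,
      (paletteGraph (Set.range C)).Reachable ⟨C a, a, rfl⟩ ⟨C b, b, rfl⟩ := by
    intro a b
    induction D.oneComponent a b with
    | refl => exact SimpleGraph.Reachable.refl _
    | @tail x y _ h ih =>
      refine ih.trans ?_
      obtain ⟨c, hc⟩ := h
      by_cases heq : C x = C y
      · have : (⟨C x, x, rfl⟩ : Set.range C) = ⟨C y, y, rfl⟩ := Subtype.ext heq
        rw [this]
      · refine SimpleGraph.Adj.reachable ⟨heq, C (D.overArc c), ⟨_, rfl⟩, ?_⟩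
        rcases hc with ⟨h1, h2⟩ | ⟨h1, h2⟩
        · rw [← h1, ← h2, ← hC c]
        · rw [← h1, ← h2, ← hC c]; ring
  push_neg at hnc
  obtain ⟨a, b, hab⟩ := hnc
  haveI : Nonempty (Set.range C) := ⟨⟨C a, a, rfl⟩⟩
  refine ⟨fun u v => ?_⟩
  obtain ⟨x, y, rfl⟩ := u
  obtain ⟨z, w, rfl⟩ := v
  exact key y w
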